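/- For all n ≥ 0, the word W_n is a Lyndon word with respect to the standard order on ℕ. -/

import Mathlib

/-- The morphism `phi` on the alphabet `ℕ`: `phi (2i) = (2i)(2i+1)` and `phi (2i+1) = (2i+2)`. -/
def phi (a : ℕ) : List ℕ := if a % 2 = 0 then [a, a + 1] else [a + 1]

/-- The finite ZWW words: `W n = phi^n(0)`, so `W 0 = 0`, `W 1 = 01`, `W 2 = 012`, `W 3 = 01223`. -/
def W (n : ℕ) : List ℕ := (fun w => w.flatMap phi)^[n] [0]

/-- A nonempty word is Lyndon if it is lexicographically strictly less than each of its
conjugates `v ++ u` where `x = u ++ v` with `u, v` nonempty. -/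
def IsLyndon (x : List ℕ) : Prop :=
  x ≠ [] ∧ ∀ u v : List ℕ, u ≠ [] → v ≠ [] → x = u ++ v → List.Lex (· < ·) x (v ++ u)

/-!
The letter `0` occurs in `W n` only as its first letter, since `phi 0 = 01` and `phi` maps
positive letters to positive letters. A word whose first letter is strictly smaller than all its
other letters is Lyndon: every proper conjugate begins with one of those larger letters.
-/

theorem isLyndon_zero_cons {t : List ℕ} (ht : ∀ x ∈ t, 0 < x) : IsLyndon (0 :: t) := by
  refine ⟨List.cons_ne_nil _ _, fun u v hu hv huv => ?_⟩
  obtain ⟨a, u, rfl⟩ := List.exists_cons_of_ne_nil hu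
  obtain ⟨b, v, rfl⟩ := List.exists_cons_of_ne_nil hv
  obtain ⟨-, rfl⟩ : 0 = a ∧ t = u ++ b :: v := by simpa using huv
  exact List.Lex.rel (ht b (by simp))

theorem W_succ (n : ℕ) : W (n + 1) = (W n).flatMap phi :=
  Function.iterate_succ_apply' _ n [0]

theorem pos_of_mem_phi {a b : ℕ} (ha : 0 < a) (hb : b ∈ phi a) : 0 < b := by
  unfold phi at hb
  split at hb <;> simp at hb <;> omega

theorem exists_W_eq_zero_cons (n : ℕ) : ∃ t : List ℕ, W n = 0 :: t ∧ ∀ x ∈ t, 0 < x := by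
  induction n with
  | zero => exact ⟨[], rfl, by simp⟩
  | succ n ih =>
    obtain ⟨t, ht, htpos⟩ := ih
    refine ⟨1 :: t.flatMap phi, by simp [W_succ, ht, phi], ?_⟩
    simp only [List.mem_cons, List.mem_flatMap]
    rintro x (rfl | ⟨a, ha, hx⟩)
    · exact Nat.one_pos
    · exact pos_of_mem_phi (htpos a ha) hx

/-- For all `n ≥ 0`, the word `W n` is a Lyndon word. -/
theorem zww_isLyndon : ∀ n : ℕ, IsLyndon (W n) := by
  intro n
  obtain ⟨t, hW, ht⟩ := exists_W_eq_zero_cons n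
  rw [hW]
  exact isLyndon_zero_cons ht
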